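/- Let p be a prime, l ≥ 1 and k ≥ 1 integers, and a, b, u, t integers with gcd(b, p) = 1 and gcd(a, p) = 1. Then Ŝ(a, u, t, b, 1, p^l) = e(ū b / p^l) if gcd(u, p) = 1 and Ŝ(a, u, t, b, 1, p^l) = 0 if p | u, where ū is a multiplicative inverse of u modulo p^l. Symmetrically, Ŝ(a, u, t, b, p^k, 1) = e(t̄ a / p^k) if gcd(t, p) = 1 and equals 0 if p | t, where t̄ is a multiplicative inverse of t modulo p^k. -/

import Mathlib

open scoped BigOperators

/-- `e(x) = exp(2 π i x)`. -/
noncomputable def eC (x : ℝ) : ℂ := Complex.exp (2 * Real.pi * Complex.I * x)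

/-- The GL(3) long-element Kloosterman sum `S(m₁,m₂,n₁,n₂;D₁,D₂)`.
Since the summand is independent of the admissible choices of `Y₁,Z₁,Y₂,Z₂`
(and each admissible `(B₁,C₁)` has exactly `D₁` admissible pairs `(Y₁,Z₁)` modulo `D₁`,
similarly for `(Y₂,Z₂)`), we define the sum by averaging over all admissible choices. -/
noncomputable def SGL3 (m1 m2 n1 n2 : ℤ) (D1 D2 : ℕ) : ℂ :=
  ((D1 : ℂ) * (D2 : ℂ))⁻¹ *
    ∑ B1 ∈ Finset.range D1, ∑ C1 ∈ Finset.range D1,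
      ∑ B2 ∈ Finset.range D2, ∑ C2 ∈ Finset.range D2,
        ∑ Y1 ∈ Finset.range D1, ∑ Z1 ∈ Finset.range D1,
          ∑ Y2 ∈ Finset.range D2, ∑ Z2 ∈ Finset.range D2,
            if Nat.gcd B1 (Nat.gcd C1 D1) = 1 ∧ Nat.gcd B2 (Nat.gcd C2 D2) = 1 ∧
                ((D1 : ℤ) * (D2 : ℤ)) ∣ ((D1 : ℤ) * (C2 : ℤ) + (B1 : ℤ) * (B2 : ℤ) + (C1 : ℤ) * (D2 : ℤ)) ∧
                (D1 : ℤ) ∣ ((Y1 : ℤ) * (B1 : ℤ) + (Z1 : ℤ) * (C1 : ℤ) - 1) ∧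
                (D2 : ℤ) ∣ ((Y2 : ℤ) * (B2 : ℤ) + (Z2 : ℤ) * (C2 : ℤ) - 1) then
              eC (((m1 * (B1 : ℤ) + n1 * ((Y1 : ℤ) * (D2 : ℤ) - (Z1 : ℤ) * (B2 : ℤ)) : ℤ) : ℝ) / (D1 : ℝ)) *
                eC (((m2 * (B2 : ℤ) + n2 * ((Y2 : ℤ) * (D1 : ℤ) - (Z2 : ℤ) * (B1 : ℤ)) : ℤ) : ℝ) / (D2 : ℝ))
            else 0

/-- The classical Kloosterman sum `S(m,n;c) = ∑_{x (c), (x,c)=1} e((m x + n x̄)/c)`. -/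
noncomputable def Kl (m n : ℤ) (c : ℕ) : ℂ :=
  ∑ x ∈ Finset.range c,
    if Nat.gcd x c = 1 then
      eC (((m * (x : ℤ) + n * ((((x : ZMod c)⁻¹).val : ℕ) : ℤ) : ℤ) : ℝ) / (c : ℝ))
    else 0

/-- The partial (middle two-variable) Fourier transform of the GL(3) Kloosterman sum. -/
noncomputable def Shat (a u t b : ℤ) (D1 D2 : ℕ) : ℂ :=
  ((D1 : ℂ) * (D2 : ℂ))⁻¹ *
    ∑ x ∈ Finset.range D1, ∑ y ∈ Finset.range D2,
      SGL3 a (y : ℤ) (x : ℤ) b D1 D2 * eC (((-((x : ℤ) * t) : ℤ) : ℝ) / (D1 : ℝ)) *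
        eC (((-((y : ℤ) * u) : ℤ) : ℝ) / (D2 : ℝ))

/-- `R(t,D₁,D₂) = max_{(ab,D₁)=1} ∑_{u (D₂)} |Ŝ(a,u,bt,1,D₁,D₂)|`, realized as a supremum. -/
noncomputable def Rfun (t : ℤ) (D1 D2 : ℕ) : ℝ :=
  sSup {r : ℝ | ∃ a b : ℤ, Int.gcd (a * b) D1 = 1 ∧
    r = ∑ u ∈ Finset.range D2, norm (Shat a (u : ℤ) (b * t) 1 D1 D2)}

/-- The quantity `M(β)` with outer sum over `q ≤ Q` and moduli `c ≤ X/q`. -/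
noncomputable def Mgen (Q X : ℝ) (β : ℕ → ℂ) : ℝ :=
  ∑ q ∈ Finset.Icc 1 ⌊Q⌋₊, ∑ d1 ∈ q.divisors,
    ((d1 : ℝ) / (q : ℝ)) *
      ∑ c ∈ Finset.Icc 1 ⌊X / (q : ℝ)⌋₊,
        if Nat.gcd c q = 1 then
          ∑ tt ∈ Finset.range c,
            if Nat.gcd tt c = 1 then
              (norm (∑ᶠ (n : ℕ) (_ : Nat.gcd n q = d1),
                β n * eC (((tt * n : ℕ) : ℝ) / (c : ℝ)))) ^ 2
            else 0
        else 0

/-- The bilinear form `𝒮 = ∑_{D₁,D₂,m,n} γ_{D₁,D₂} α_m β_n S(1,m,n,1;D₁,D₂)`. -/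
noncomputable def Sbil (γ : ℕ → ℕ → ℂ) (α β : ℕ → ℂ) : ℂ :=
  ∑ᶠ (D1 : ℕ) (D2 : ℕ) (m : ℕ) (n : ℕ),
    γ D1 D2 * α m * β n * SGL3 1 (m : ℤ) (n : ℤ) 1 D1 D2

/-- `‖β‖ = (∑_n |β_n|²)^{1/2}`. -/
noncomputable def seqNorm (β : ℕ → ℂ) : ℝ := Real.sqrt (∑ᶠ n : ℕ, norm (β n) ^ 2)

/-! When one modulus is `1`, the GL(3) Kloosterman sum degenerates to the classical Kloosterman
sum `S(m,n;D) = ∑_{xy ≡ 1} e((mx + ny)/D)`, which is symmetric in `m` and `n`. Orthogonality of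
additive characters then gives `D⁻¹ ∑_y S(y,n;D) e(-yu/D) = ∑_{uz ≡ 1} e(nz/D)`: this is
`e(ū n/D)` when `u` is invertible modulo `D`, and an empty sum when `p ∣ u` and `p ∣ D`. -/

open Finset
open ZMod (stdAddChar)

lemma eC_zero : eC 0 = 1 := by simp [eC]

lemma eC_intCast_div (D : ℕ) [NeZero D] (m : ℤ) :
    eC ((m : ℝ) / D) = stdAddChar (m : ZMod D) := by
  rw [ZMod.stdAddChar_coe, eC]
  push_cast
  ring_nf

lemma sum_range_eq_sum_zmod {M : Type*} [AddCommMonoid M] (D : ℕ) [NeZero D] (f : ℕ → M) :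
    ∑ x ∈ range D, f x = ∑ x : ZMod D, f x.val := by
  obtain ⟨n, rfl⟩ := Nat.exists_eq_succ_of_ne_zero (NeZero.ne D)
  exact (Fin.sum_univ_eq_sum_range f _).symm

lemma sum_stdAddChar_mul (D : ℕ) [NeZero D] (c : ZMod D) :
    ∑ y : ZMod D, stdAddChar (y * c) = if c = 0 then (D : ℂ) else 0 := by
  rw [AddChar.sum_mulShift c (ZMod.isPrimitive_stdAddChar D), ZMod.card, Nat.cast_ite,
    Nat.cast_zero]

lemma sum_ite_mul_eq_one_of_mul_eq_one {R M : Type*} [CommMonoid R] [Fintype R] [DecidableEq R]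
    [AddCommMonoid M] {u v : R} (huv : u * v = 1) (f : R → M) :
    ∑ z, (if u * z = 1 then f z else 0) = f v := by
  have key : ∀ z, u * z = 1 ↔ z = v := fun z =>
    ⟨fun h => by simpa [← mul_assoc, mul_comm v u, huv] using congrArg (v * ·) h,
     fun h => h ▸ huv⟩
  simp only [key, Finset.sum_ite_eq', Finset.mem_univ, if_true]

lemma sum_ite_mul_eq_one_of_not_isUnit {R M : Type*} [CommMonoid R] [Fintype R] [DecidableEq R]
    [AddCommMonoid M] {u : R} (hu : ¬IsUnit u) (f : R → M) :
    ∑ z, (if u * z = 1 then f z else 0) = 0 :=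
  Finset.sum_eq_zero fun z _ => if_neg fun h => hu (IsUnit.of_mul_eq_one z h)

lemma Kl_eq_sum_mul_eq_one (m n : ℤ) (D : ℕ) [NeZero D] :
    Kl m n D = ∑ x : ZMod D, ∑ y : ZMod D,
      if x * y = 1 then stdAddChar ((m : ZMod D) * x + (n : ZMod D) * y) else 0 := by
  unfold Kl
  rw [sum_range_eq_sum_zmod]
  refine Finset.sum_congr rfl fun x _ => ?_
  have hcop : Nat.gcd x.val D = 1 ↔ IsUnit x := by
    rw [← Nat.Coprime, ← ZMod.isUnit_iff_coprime, ZMod.natCast_zmod_val]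
  by_cases hx : IsUnit x
  · rw [if_pos (hcop.2 hx), sum_ite_mul_eq_one_of_mul_eq_one (ZMod.mul_inv_of_unit x hx),
      eC_intCast_div]
    push_cast
    simp only [ZMod.natCast_val, ZMod.cast_id', id]
  · rw [if_neg (mt hcop.1 hx), sum_ite_mul_eq_one_of_not_isUnit hx]

lemma Kl_comm (m n : ℤ) (D : ℕ) [NeZero D] : Kl m n D = Kl n m D := by
  rw [Kl_eq_sum_mul_eq_one, Kl_eq_sum_mul_eq_one, Finset.sum_comm]
  refine Finset.sum_congr rfl fun y _ => Finset.sum_congr rfl fun x _ => ?_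
  rw [mul_comm x y, add_comm]

lemma inv_mul_sum_Kl_mul_eC (n u : ℤ) (D : ℕ) [NeZero D] :
    (D : ℂ)⁻¹ * ∑ y ∈ range D, Kl y n D * eC (((-((y : ℤ) * u) : ℤ) : ℝ) / (D : ℝ)) =
      ∑ z : ZMod D, if (u : ZMod D) * z = 1 then stdAddChar ((n : ZMod D) * z) else 0 := by
  have hD : (D : ℂ) ≠ 0 := Nat.cast_ne_zero.2 (NeZero.ne D)
  let F : ZMod D → ZMod D → ℂ := fun x z =>
    if x * z = 1 then stdAddChar ((n : ZMod D) * z) else 0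
  calc (D : ℂ)⁻¹ * ∑ y ∈ range D, Kl y n D * eC (((-((y : ℤ) * u) : ℤ) : ℝ) / (D : ℝ))
      = (D : ℂ)⁻¹ * ∑ y : ZMod D, ∑ x, ∑ z, F x z * stdAddChar (y * (x - (u : ZMod D))) := by
        rw [sum_range_eq_sum_zmod]
        congr 1
        refine Finset.sum_congr rfl fun y _ => ?_
        rw [Kl_eq_sum_mul_eq_one, eC_intCast_div, Finset.sum_mul]
        refine Finset.sum_congr rfl fun x _ => ?_
        rw [Finset.sum_mul]
        refine Finset.sum_congr rfl fun z _ => ?_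
        simp only [F, ite_mul, zero_mul, ← AddChar.map_add_eq_mul]
        push_cast
        simp only [ZMod.natCast_val, ZMod.cast_id', id]
        ring_nf
    _ = ∑ x, ∑ z, F x z * ((D : ℂ)⁻¹ * ∑ y : ZMod D, stdAddChar (y * (x - (u : ZMod D)))) := by
        simp only [Finset.mul_sum]
        rw [Finset.sum_comm]
        refine Finset.sum_congr rfl fun x _ => ?_
        rw [Finset.sum_comm]
        refine Finset.sum_congr rfl fun z _ => Finset.sum_congr rfl fun y _ => ?_
        ring
    _ = ∑ z, F u z := by
        simp only [sum_stdAddChar_mul, sub_eq_zero]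
        rw [Fintype.sum_eq_single (u : ZMod D) fun x hx => by simp [hx]]
        simp [hD]

/-- The summation condition of `SGL3` once the other modulus is `1`. -/
lemma admissible_iff {D : ℕ} [NeZero D] (B C Y Z : ZMod D) :
    (Nat.gcd B.val (Nat.gcd C.val D) = 1 ∧ (D : ℤ) ∣ (C.val : ℤ) ∧
        (D : ℤ) ∣ (Y.val : ℤ) * B.val + (Z.val : ℤ) * C.val - 1) ↔ C = 0 ∧ B * Y = 1 := by
  simp only [← ZMod.intCast_zmod_eq_zero_iff_dvd]
  push_cast
  simp only [ZMod.natCast_val, ZMod.cast_id', id]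
  constructor
  · rintro ⟨-, rfl, h⟩
    exact ⟨rfl, by linear_combination h⟩
  · rintro ⟨rfl, h⟩
    refine ⟨?_, rfl, by linear_combination h⟩
    rw [ZMod.val_zero, Nat.gcd_zero_left, ← Nat.Coprime, ← ZMod.isUnit_iff_coprime,
      ZMod.natCast_zmod_val]
    exact IsUnit.of_mul_eq_one Y h

lemma inv_mul_sum_admissible_eq_Kl (m n : ℤ) (D : ℕ) [NeZero D] :
    (D : ℂ)⁻¹ * ∑ B ∈ range D, ∑ C ∈ range D, ∑ Y ∈ range D, ∑ Z ∈ range D,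
      (if Nat.gcd B (Nat.gcd C D) = 1 ∧ (D : ℤ) ∣ (C : ℤ) ∧
          (D : ℤ) ∣ (Y : ℤ) * B + (Z : ℤ) * C - 1 then
        eC (((m * B + n * Y : ℤ) : ℝ) / D) else 0) = Kl m n D := by
  have hD : (D : ℂ) ≠ 0 := Nat.cast_ne_zero.2 (NeZero.ne D)
  simp only [sum_range_eq_sum_zmod, admissible_iff]
  rw [Kl_eq_sum_mul_eq_one, Finset.mul_sum]
  refine Finset.sum_congr rfl fun B _ => ?_
  rw [Fintype.sum_eq_single 0 fun C hC => by simp [hC], Finset.mul_sum]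
  refine Finset.sum_congr rfl fun Y _ => ?_
  simp only [true_and, sum_const, card_univ, ZMod.card, nsmul_eq_mul, ← mul_assoc,
    inv_mul_cancel₀ hD, one_mul, eC_intCast_div]
  push_cast
  simp only [ZMod.natCast_val, ZMod.cast_id', id]

lemma SGL3_one_left (m1 m2 n1 n2 : ℤ) (D : ℕ) [NeZero D] :
    SGL3 m1 m2 n1 n2 1 D = Kl m2 n2 D := by
  unfold SGL3
  simp only [sum_range_one, Nat.cast_one, one_mul, Nat.cast_zero, mul_zero, zero_mul,
    Nat.gcd_one_right, add_zero, sub_zero, mul_one, one_dvd, true_and, div_one,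
    Int.cast_zero, eC_zero]
  exact inv_mul_sum_admissible_eq_Kl m2 n2 D

lemma SGL3_one_right (m1 m2 n1 n2 : ℤ) (D : ℕ) [NeZero D] :
    SGL3 m1 m2 n1 n2 D 1 = Kl m1 n1 D := by
  unfold SGL3
  simp only [sum_range_one, Nat.cast_one, Nat.cast_zero, mul_zero, zero_mul,
    Nat.gcd_one_right, zero_add, add_zero, sub_zero, mul_one, one_dvd, true_and, and_true,
    div_one, Int.cast_zero, eC_zero]
  exact inv_mul_sum_admissible_eq_Kl m1 n1 D

lemma Shat_one_left (a u t b : ℤ) (D : ℕ) [NeZero D] :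
    Shat a u t b 1 D =
      ∑ z : ZMod D, if (u : ZMod D) * z = 1 then stdAddChar ((b : ZMod D) * z) else 0 := by
  unfold Shat
  simp only [sum_range_one, Nat.cast_one, one_mul, Nat.cast_zero, zero_mul, neg_zero,
    Int.cast_zero, div_one, eC_zero, mul_one, SGL3_one_left]
  exact inv_mul_sum_Kl_mul_eC b u D

lemma Shat_one_right (a u t b : ℤ) (D : ℕ) [NeZero D] :
    Shat a u t b D 1 =
      ∑ z : ZMod D, if (t : ZMod D) * z = 1 then stdAddChar ((a : ZMod D) * z) else 0 := by
  unfold Shat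
  simp only [sum_range_one, Nat.cast_one, mul_one, Nat.cast_zero, zero_mul, neg_zero,
    Int.cast_zero, div_one, eC_zero, SGL3_one_right, Kl_comm a]
  exact inv_mul_sum_Kl_mul_eC a t D

lemma sum_ite_intCast_mul_eq_one_of_modEq (D : ℕ) [NeZero D] {u uinv : ℤ}
    (h : u * uinv ≡ 1 [ZMOD D]) (n : ℤ) :
    ∑ z : ZMod D, (if (u : ZMod D) * z = 1 then stdAddChar ((n : ZMod D) * z) else 0) =
      eC (((uinv * n : ℤ) : ℝ) / D) := by
  have huinv : (u : ZMod D) * uinv = 1 := by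
    exact_mod_cast (ZMod.intCast_eq_intCast_iff _ _ D).2 h
  rw [sum_ite_mul_eq_one_of_mul_eq_one huinv, eC_intCast_div]
  push_cast
  ring_nf

lemma not_isUnit_intCast_of_dvd {p D : ℕ} (hp : p.Prime) (hpD : p ∣ D) {u : ℤ}
    (hpu : (p : ℤ) ∣ u) : ¬IsUnit (u : ZMod D) := by
  have := Fact.mk hp
  intro hu
  have := hu.map (ZMod.castHom hpD (ZMod p))
  rw [map_intCast, (ZMod.intCast_zmod_eq_zero_iff_dvd u p).2 hpu] at this
  exact not_isUnit_zero this

theorem Shat_modulus_one_general (p : ℕ) (hp : p.Prime) (k l : ℕ) (hk : 1 ≤ k) (hl : 1 ≤ l)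
    (a b u t : ℤ) :
    ((Int.gcd u p = 1 → ∀ uinv : ℤ, u * uinv ≡ 1 [ZMOD ((p : ℤ) ^ l)] →
        Shat a u t b 1 (p ^ l) = eC (((uinv * b : ℤ) : ℝ) / ((p : ℝ) ^ l))) ∧
      ((p : ℤ) ∣ u → Shat a u t b 1 (p ^ l) = 0)) ∧
    ((Int.gcd t p = 1 → ∀ tinv : ℤ, t * tinv ≡ 1 [ZMOD ((p : ℤ) ^ k)] →
        Shat a u t b (p ^ k) 1 = eC (((tinv * a : ℤ) : ℝ) / ((p : ℝ) ^ k))) ∧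
      ((p : ℤ) ∣ t → Shat a u t b (p ^ k) 1 = 0)) := by
  have : NeZero p := ⟨hp.ne_zero⟩
  refine ⟨⟨fun _ uinv huinv => ?_, fun hpu => ?_⟩, fun _ tinv htinv => ?_, fun hpt => ?_⟩
  · rw [Shat_one_left, sum_ite_intCast_mul_eq_one_of_modEq _ (by exact_mod_cast huinv)]
    push_cast; rfl
  · rw [Shat_one_left, sum_ite_mul_eq_one_of_not_isUnit
      (not_isUnit_intCast_of_dvd hp (dvd_pow_self p (by omega)) hpu)]
  · rw [Shat_one_right, sum_ite_intCast_mul_eq_one_of_modEq _ (by exact_mod_cast htinv)]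
    push_cast; rfl
  · rw [Shat_one_right, sum_ite_mul_eq_one_of_not_isUnit
      (not_isUnit_intCast_of_dvd hp (dvd_pow_self p (by omega)) hpt)]

/-- Evaluation of `Ŝ` when one modulus is `1`. -/
theorem Shat_modulus_one (p : ℕ) (hp : p.Prime) (k l : ℕ) (hk : 1 ≤ k) (hl : 1 ≤ l)
    (a b u t : ℤ) (hb : Int.gcd b p = 1) (ha : Int.gcd a p = 1) :
    ((Int.gcd u p = 1 → ∀ uinv : ℤ, u * uinv ≡ 1 [ZMOD ((p : ℤ) ^ l)] →
        Shat a u t b 1 (p ^ l) = eC (((uinv * b : ℤ) : ℝ) / ((p : ℝ) ^ l))) ∧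
      ((p : ℤ) ∣ u → Shat a u t b 1 (p ^ l) = 0)) ∧
    ((Int.gcd t p = 1 → ∀ tinv : ℤ, t * tinv ≡ 1 [ZMOD ((p : ℤ) ^ k)] →
        Shat a u t b (p ^ k) 1 = eC (((tinv * a : ℤ) : ℝ) / ((p : ℝ) ^ k))) ∧
      ((p : ℤ) ∣ t → Shat a u t b (p ^ k) 1 = 0)) :=
  Shat_modulus_one_general p hp k l hk hl a b u t
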